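/- arXiv:1403.0054 — 6 statements merged into one kernel-verified Lean document; each statement's English description precedes it below -/
import Mathlib

section
/- Let N ≥ 1 and, for m ∈ {1,2}, let f_m(x) = xᴴ A_m x + 2 Re(b_mᴴ x) + c_m, where A_m ∈ ℂ^{N×N} is Hermitian, b_m ∈ ℂ^N, and c_m ∈ ℝ. Suppose there exists x̂ ∈ ℂ^N with f_1(x̂) < 0. Then the implication (for all x ∈ ℂ^N, f_1(x) ≤ 0 implies f_2(x) ≤ 0) holds if and only if there exists δ ≥ 0 such that the (N+1)×(N+1) Hermitian block matrix δ·[[A_1, b_1],[b_1ᴴ, c_1]] − [[A_2, b_2],[b_2ᴴ, c_2]] is positive semidefinite. -/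
open Matrix
open scoped ComplexOrder

/-- The quadratic function `f(x) = xᴴ A x + 2 Re(bᴴ x) + c` on `ℂ^N`. -/
noncomputable def quadF {N : ℕ} (A : Matrix (Fin N) (Fin N) ℂ) (b : Fin N → ℂ) (c : ℝ)
    (x : Fin N → ℂ) : ℝ :=
  (star x ⬝ᵥ A *ᵥ x).re + 2 * (star b ⬝ᵥ x).re + c

/-- The `(N+1)×(N+1)` Hermitian block matrix `[[A, b],[bᴴ, c]]`. -/
noncomputable def blockM {N : ℕ} (A : Matrix (Fin N) (Fin N) ℂ) (b : Fin N → ℂ) (c : ℝ) :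
    Matrix (Fin N ⊕ Unit) (Fin N ⊕ Unit) ℂ :=
  Matrix.fromBlocks A (Matrix.replicateCol Unit b) (Matrix.replicateRow Unit (star b))
    (Matrix.of fun _ _ => (c : ℂ))

/-!
The pairs `(xᴴ P x, xᴴ Q x)`, `x ∈ ℂⁿ`, form a convex cone: for two points `x, z`, a phase `ω`
kills the cross term of a suitable real combination of `P` and `Q`, and then the path
`cos s • x + sin s • ω z` runs along the line through the two image points, so it covers the
segment between them. Separating this cone from the open quadrant `{a < 0 < b}` gives the
homogeneous S-lemma. The inhomogeneous forms are the Hermitian forms of `[[Aᵢ, bᵢ], [bᵢᴴ, cᵢ]]`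
at `(x, 1)`; points `(x, 0)` are limits along the direction of the Slater point `(x̂, 1)`.
-/

open Set Complex ComplexConjugate

theorem segment_subset_image_of_collinear {g : ℝ → ℝ × ℝ} {a b : ℝ} (hab : a ≤ b)
    (hg : ContinuousOn g (Icc a b))
    (hline : ∀ s ∈ Icc a b, ((g s).1 - (g a).1) * ((g b).2 - (g a).2) =
      ((g s).2 - (g a).2) * ((g b).1 - (g a).1)) :
    segment ℝ (g a) (g b) ⊆ g '' Icc a b := by
  rintro _ ⟨u, v, hu, hv, huv, rfl⟩
  obtain rfl : u = 1 - v := by linarith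
  set d₁ := (g b).1 - (g a).1
  set d₂ := (g b).2 - (g a).2
  by_cases hd : d₁ = 0 ∧ d₂ = 0
  · have hba : g b = g a := Prod.ext (sub_eq_zero.1 hd.1) (sub_eq_zero.1 hd.2)
    exact ⟨a, left_mem_Icc.2 hab, by rw [hba, ← add_smul, sub_add_cancel, one_smul]⟩
  have hd : 0 < d₁ ^ 2 + d₂ ^ 2 := by
    rcases not_and_or.1 hd with h | h <;> positivity
  set m : ℝ → ℝ := fun s => d₁ * (g s).1 + d₂ * (g s).2
  have hm : ContinuousOn m (Icc a b) :=
    (continuous_const.mul continuous_fst).add (continuous_const.mul continuous_snd)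
      |>.comp_continuousOn hg
  have hmv : m a + v * (d₁ ^ 2 + d₂ ^ 2) ∈ Icc (m a) (m b) := by
    refine ⟨by nlinarith, ?_⟩
    have : m b = m a + (d₁ ^ 2 + d₂ ^ 2) := by simp only [m, d₁, d₂]; ring
    rw [this]
    nlinarith [hu]
  obtain ⟨s, hs, hms⟩ := intermediate_value_Icc hab hm hmv
  refine ⟨s, hs, ?_⟩
  have h₁ := hline s hs
  simp only [m] at hms
  refine Prod.ext ?_ ?_ <;>
    simp only [Prod.fst_add, Prod.snd_add, Prod.smul_fst, Prod.smul_snd, smul_eq_mul] <;>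
    apply mul_left_cancel₀ hd.ne'
  · linear_combination d₁ * hms + d₂ * h₁
  · linear_combination d₂ * hms - d₁ * h₁

theorem nonneg_and_nonpos_of_forall_neg {α β : ℝ}
    (h : ∀ a b : ℝ, a < 0 → 0 < b → α * a + β * b < 0) : 0 ≤ α ∧ β ≤ 0 := by
  constructor
  · by_contra! hα
    have ht : 0 < (|β| + 1) / -α := div_pos (by positivity) (neg_pos.2 hα)
    have hmul : α * -((|β| + 1) / -α) = |β| + 1 := by field_simp [hα.ne]
    linarith [h _ 1 (neg_neg_of_pos ht) one_pos, neg_abs_le β]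
  · by_contra! hβ
    have ht : 0 < (|α| + 1) / β := by positivity
    have hmul : β * ((|α| + 1) / β) = |α| + 1 := by field_simp
    linarith [h (-1) _ (by norm_num) ht, le_abs_self α]

theorem exists_norm_eq_one_re_mul_eq_zero (c : ℂ) : ∃ ω : ℂ, ‖ω‖ = 1 ∧ (ω * c).re = 0 := by
  refine ⟨I * exp (-(c.arg * I)), by simp [norm_exp], ?_⟩
  have hc := norm_mul_exp_arg_mul_I c
  set θ := c.arg
  rw [← hc, mul_comm (‖c‖ : ℂ), ← mul_assoc, mul_assoc I, ← exp_add, neg_add_cancel, exp_zero,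
    mul_one, re_mul_ofReal, I_re, zero_mul]

section HermForm

variable {n : Type*} [Fintype n]

noncomputable def hermForm (M : Matrix n n ℂ) (x : n → ℂ) : ℝ := (star x ⬝ᵥ M *ᵥ x).re

theorem continuous_hermForm (M : Matrix n n ℂ) : Continuous (hermForm M) := by
  unfold hermForm; fun_prop

@[simp]
theorem hermForm_zero (M : Matrix n n ℂ) : hermForm M 0 = 0 := by simp [hermForm]

theorem hermForm_sub (M M' : Matrix n n ℂ) (x : n → ℂ) :
    hermForm (M - M') x = hermForm M x - hermForm M' x := by
  simp [hermForm, sub_mulVec]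

theorem hermForm_ofReal_smul (r : ℝ) (M : Matrix n n ℂ) (x : n → ℂ) :
    hermForm ((r : ℂ) • M) x = r * hermForm M x := by
  simp [hermForm, smul_mulVec]

theorem hermForm_smul (M : Matrix n n ℂ) (α : ℂ) (x : n → ℂ) :
    hermForm M (α • x) = ‖α‖ ^ 2 * hermForm M x := by
  rw [hermForm, star_smul, mulVec_smul, smul_dotProduct, dotProduct_smul, smul_smul,
    smul_eq_mul, star_def, conj_mul', ← ofReal_pow, re_ofReal_mul, hermForm]

theorem hermForm_smul_add_smul {M : Matrix n n ℂ} (hM : M.IsHermitian) (α β : ℂ) (x z : n → ℂ) :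
    hermForm M (α • x + β • z) = ‖α‖ ^ 2 * hermForm M x + ‖β‖ ^ 2 * hermForm M z +
      2 * (conj α * β * (star x ⬝ᵥ M *ᵥ z)).re := by
  have hzx : star z ⬝ᵥ M *ᵥ x = conj (star x ⬝ᵥ M *ᵥ z) := by
    rw [← star_def]
    symm
    rw [star_dotProduct, star_mulVec, hM.eq, star_star, dotProduct_mulVec]
  have hsum : star (α • x + β • z) ⬝ᵥ M *ᵥ (α • x + β • z) =
      conj α * α * (star x ⬝ᵥ M *ᵥ x) + conj β * β * (star z ⬝ᵥ M *ᵥ z) +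
        (conj α * β * (star x ⬝ᵥ M *ᵥ z) + conj (conj α * β * (star x ⬝ᵥ M *ᵥ z))) := by
    simp only [star_add, star_smul, mulVec_add, mulVec_smul, add_dotProduct, dotProduct_add,
      smul_dotProduct, dotProduct_smul, smul_eq_mul, hzx, map_mul, conj_conj, star_def]
    ring
  rw [hermForm, hsum, add_re, add_re, add_re, conj_re, conj_mul', conj_mul', ← ofReal_pow,
    ← ofReal_pow, re_ofReal_mul, re_ofReal_mul, hermForm, hermForm]
  ring

theorem hermForm_cos_smul_add_sin_smul {M : Matrix n n ℂ} (hM : M.IsHermitian) {ω : ℂ}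
    (hω : ‖ω‖ = 1) (x z : n → ℂ) (s : ℝ) :
    hermForm M ((Real.cos s : ℂ) • x + (Real.sin s * ω) • z) =
      Real.cos s ^ 2 * hermForm M x + Real.sin s ^ 2 * hermForm M z +
        2 * Real.cos s * Real.sin s * (ω * (star x ⬝ᵥ M *ᵥ z)).re := by
  have hc : (Real.cos s : ℂ) * (Real.sin s * ω) * (star x ⬝ᵥ M *ᵥ z) =
      ((Real.cos s * Real.sin s : ℝ) : ℂ) * (ω * (star x ⬝ᵥ M *ᵥ z)) := by
    push_cast; ring
  rw [hermForm_smul_add_smul hM, conj_ofReal, hc, re_ofReal_mul]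
  simp only [norm_mul, hω, mul_one, norm_real, Real.norm_eq_abs, sq_abs]
  ring

theorem posSemidef_iff_hermForm_nonneg {M : Matrix n n ℂ} (hM : M.IsHermitian) :
    M.PosSemidef ↔ ∀ x, 0 ≤ hermForm M x := by
  refine ⟨fun h x => h.re_dotProduct_nonneg x, fun h => ?_⟩
  refine posSemidef_iff_dotProduct_mulVec.2 ⟨hM, fun x => Complex.nonneg_iff.2 ⟨h x, ?_⟩⟩
  exact (hM.im_star_dotProduct_mulVec_self x).symm

def jointRange (P Q : Matrix n n ℂ) : Set (ℝ × ℝ) := range fun x => (hermForm P x, hermForm Q x)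

theorem convex_jointRange {P Q : Matrix n n ℂ} (hP : P.IsHermitian) (hQ : Q.IsHermitian) :
    Convex ℝ (jointRange P Q) := by
  refine convex_iff_segment_subset.2 ?_
  rintro _ ⟨x, rfl⟩ _ ⟨z, rfl⟩
  set d₁ := hermForm P z - hermForm P x
  set d₂ := hermForm Q z - hermForm Q x
  obtain ⟨ω, hω, hωc⟩ := exists_norm_eq_one_re_mul_eq_zero
    (d₂ * (star x ⬝ᵥ P *ᵥ z) - d₁ * (star x ⬝ᵥ Q *ᵥ z))
  have hcross : d₂ * (ω * (star x ⬝ᵥ P *ᵥ z)).re - d₁ * (ω * (star x ⬝ᵥ Q *ᵥ z)).re = 0 := by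
    rw [← hωc]
    simp only [mul_sub, sub_re, mul_left_comm ω, re_ofReal_mul]
  set w : ℝ → n → ℂ := fun s => (Real.cos s : ℂ) • x + (Real.sin s * ω) • z
  set g : ℝ → ℝ × ℝ := fun s => (hermForm P (w s), hermForm Q (w s))
  have hg : Continuous g := by
    have : Continuous w := by fun_prop
    exact ((continuous_hermForm P).comp this).prodMk ((continuous_hermForm Q).comp this)
  have hg₀ : g 0 = (hermForm P x, hermForm Q x) := by simp [g, w]
  have hg₁ : g (Real.pi / 2) = (hermForm P z, hermForm Q z) := by simp [g, w, hermForm_smul, hω]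
  have hseg := segment_subset_image_of_collinear (by positivity : (0 : ℝ) ≤ Real.pi / 2)
    hg.continuousOn fun s _ => by
      rw [hg₀, hg₁]
      simp only [g, w, hermForm_cos_smul_add_sin_smul hP hω, hermForm_cos_smul_add_sin_smul hQ hω]
      linear_combination (2 * Real.cos s * Real.sin s) * hcross +
        (d₂ * hermForm P x - d₁ * hermForm Q x) * Real.sin_sq_add_cos_sq s
  rw [hg₀, hg₁] at hseg
  intro p hp
  obtain ⟨s, -, rfl⟩ := hseg hp
  exact ⟨w s, rfl⟩

theorem smul_mem_jointRange {P Q : Matrix n n ℂ} {p : ℝ × ℝ} (hp : p ∈ jointRange P Q) {r : ℝ}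
    (hr : 0 ≤ r) : r • p ∈ jointRange P Q := by
  obtain ⟨x, rfl⟩ := hp
  refine ⟨((√r : ℝ) : ℂ) • x, ?_⟩
  simp only [hermForm_smul, norm_real, Real.norm_eq_abs, sq_abs, Real.sq_sqrt hr]
  rfl

theorem zero_mem_jointRange (P Q : Matrix n n ℂ) : (0 : ℝ × ℝ) ∈ jointRange P Q :=
  ⟨0, by simp⟩

theorem exists_nonneg_hermForm_le_mul_of_imp {P Q : Matrix n n ℂ} (hP : P.IsHermitian)
    (hQ : Q.IsHermitian) (himp : ∀ x, hermForm P x ≤ 0 → hermForm Q x ≤ 0)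
    (hslater : ∃ x, hermForm P x < 0) :
    ∃ δ : ℝ, 0 ≤ δ ∧ ∀ x, hermForm Q x ≤ δ * hermForm P x := by
  have hdisj : Disjoint (Iio (0 : ℝ) ×ˢ Ioi (0 : ℝ)) (jointRange P Q) := by
    refine disjoint_left.2 ?_
    rintro _ ⟨hp₁, hp₂⟩ ⟨x, rfl⟩
    exact (himp x hp₁.le).not_gt hp₂
  obtain ⟨f, u, hfD, hfW⟩ := geometric_hahn_banach_open ((convex_Iio 0).prod (convex_Ioi 0))
    (isOpen_Iio.prod isOpen_Ioi) (convex_jointRange hP hQ) hdisj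
  set α := f (1, 0)
  set β := f (0, 1)
  have hf : ∀ p : ℝ × ℝ, f p = α * p.1 + β * p.2 := by
    intro p
    have hp : p = p.1 • ((1 : ℝ), (0 : ℝ)) + p.2 • ((0 : ℝ), (1 : ℝ)) := by ext <;> simp
    conv_lhs => rw [hp]
    rw [map_add, map_smul, map_smul, smul_eq_mul, smul_eq_mul, mul_comm, mul_comm p.2]
  have hu : u ≤ 0 := by simpa using hfW 0 (zero_mem_jointRange P Q)
  -- the joint range is a cone, so the separating functional is nonnegative on it
  have hfW₀ : ∀ x, 0 ≤ α * hermForm P x + β * hermForm Q x := by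
    intro x
    rw [← hf (hermForm P x, hermForm Q x)]
    by_contra! hneg
    have hr : 0 ≤ (u - 1) / f (hermForm P x, hermForm Q x) :=
      div_nonneg_of_nonpos (by linarith) hneg.le
    have := hfW _ (smul_mem_jointRange ⟨x, rfl⟩ hr)
    rw [map_smul, smul_eq_mul, div_mul_cancel₀ _ hneg.ne] at this
    linarith
  obtain ⟨hα, hβ⟩ := nonneg_and_nonpos_of_forall_neg (α := α) (β := β) fun a b ha hb => by
    have := hfD (a, b) ⟨ha, hb⟩
    rw [hf] at this
    linarith
  have hβ' : β < 0 := by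
    refine hβ.lt_of_ne fun hβ₀ => ?_
    obtain ⟨x₀, hx₀⟩ := hslater
    have h₁ := hfW₀ x₀
    have h₂ := hfD (-1, 1) ⟨by norm_num, by norm_num⟩
    rw [hf, hβ₀] at h₂
    rw [hβ₀] at h₁
    norm_num at h₂
    nlinarith
  refine ⟨α / -β, div_nonneg hα (neg_nonneg.2 hβ), fun x => ?_⟩
  rw [div_mul_eq_mul_div, le_div_iff₀ (neg_pos.2 hβ')]
  linarith [hfW₀ x]

theorem hermForm_nonpos_of_imp_of_apply_ne_zero {P Q : Matrix n n ℂ} (hP : P.IsHermitian)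
    {y₀ : n → ℂ} {i : n} (hy₀i : y₀ i ≠ 0) (hy₀ : hermForm P y₀ < 0)
    (himp : ∀ y, y i ≠ 0 → hermForm P y ≤ 0 → hermForm Q y ≤ 0)
    {y : n → ℂ} (hy : hermForm P y ≤ 0) : hermForm Q y ≤ 0 := by
  rcases ne_or_eq (y i) 0 with hyi | hyi
  · exact himp y hyi hy
  obtain ⟨ω, hω, hωc⟩ := exists_norm_eq_one_re_mul_eq_zero (star y ⬝ᵥ P *ᵥ y₀)
  -- moving from `y` towards the Slater point keeps `hermForm P` nonpositive
  set v : ℝ → n → ℂ := fun s => (1 : ℂ) • y + (s * ω : ℂ) • y₀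
  have hv : ∀ s > 0, hermForm Q (v s) ≤ 0 := by
    intro s hs
    refine himp _ (by simp [v, hyi, hs.ne', hy₀i, ← norm_ne_zero_iff, hω]) ?_
    rw [hermForm_smul_add_smul hP, map_one, one_mul, mul_assoc, re_ofReal_mul, hωc]
    simp only [norm_one, norm_mul, norm_real, Real.norm_eq_abs, hω]
    nlinarith
  have hlim : Filter.Tendsto (fun s => hermForm Q (v s)) (nhdsWithin 0 (Ioi 0))
      (nhds (hermForm Q y)) := by
    have : Continuous fun s => hermForm Q (v s) := (continuous_hermForm Q).comp (by fun_prop)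
    simpa [v] using (this.tendsto 0).mono_left nhdsWithin_le_nhds
  exact le_of_tendsto hlim (eventually_nhdsWithin_of_forall hv)

end HermForm

section BlockM

variable {N : ℕ}

theorem blockM_isHermitian {A : Matrix (Fin N) (Fin N) ℂ} (hA : A.IsHermitian) (b : Fin N → ℂ)
    (c : ℝ) : (blockM A b c).IsHermitian :=
  hA.fromBlocks (conjTranspose_replicateCol b) (by ext; simp)

theorem hermForm_blockM (A : Matrix (Fin N) (Fin N) ℂ) (b : Fin N → ℂ) (c : ℝ) (x : Fin N → ℂ)
    (t : ℂ) :
    hermForm (blockM A b c) (Sum.elim x fun _ => t) =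
      hermForm A x + 2 * (conj t * (star b ⬝ᵥ x)).re + ‖t‖ ^ 2 * c := by
  have hxb : star x ⬝ᵥ b = conj (star b ⬝ᵥ x) := by
    rw [← star_def, star_dotProduct]
  have h₁ : replicateCol Unit b *ᵥ (fun _ => t) = t • b := by
    ext; simp [mulVec, dotProduct, mul_comm]
  have h₂ : (of fun _ _ : Unit => (c : ℂ)) *ᵥ (fun _ => t) = fun _ => c * t := by
    ext; simp [mulVec, dotProduct]
  have hsum : star (Sum.elim x fun _ => t) ⬝ᵥ blockM A b c *ᵥ Sum.elim x (fun _ => t) =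
      star x ⬝ᵥ A *ᵥ x + conj (conj t * (star b ⬝ᵥ x)) + conj t * (star b ⬝ᵥ x) +
        conj t * t * c := by
    rw [blockM, fromBlocks_mulVec, Function.star_sumElim, sumElim_dotProduct_sumElim,
      Sum.elim_comp_inl, Sum.elim_comp_inr, h₁, h₂, replicateRow_mulVec_eq_const, dotProduct_add,
      dotProduct_add, dotProduct_smul, hxb]
    simp [dotProduct]
    ring
  rw [hermForm, hsum, add_re, add_re, add_re, conj_re, conj_mul', ← ofReal_pow, ← ofReal_mul,
    ofReal_re, hermForm]
  ring

theorem quadF_eq_hermForm_blockM (A : Matrix (Fin N) (Fin N) ℂ) (b : Fin N → ℂ) (c : ℝ)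
    (x : Fin N → ℂ) : quadF A b c x = hermForm (blockM A b c) (Sum.elim x fun _ => 1) := by
  rw [hermForm_blockM]
  simp [quadF, hermForm]

theorem hermForm_blockM_eq_mul_quadF (A : Matrix (Fin N) (Fin N) ℂ) (b : Fin N → ℂ) (c : ℝ)
    {y : Fin N ⊕ Unit → ℂ} (hy : y (Sum.inr ()) ≠ 0) :
    hermForm (blockM A b c) y =
      ‖y (Sum.inr ())‖ ^ 2 * quadF A b c ((y (Sum.inr ()))⁻¹ • (y ∘ Sum.inl)) := by
  have hy' : y = y (Sum.inr ()) • Sum.elim ((y (Sum.inr ()))⁻¹ • (y ∘ Sum.inl)) fun _ => 1 := by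
    ext (i | _) <;> simp [hy]
  conv_lhs => rw [hy']
  rw [hermForm_smul, quadF_eq_hermForm_blockM]

end BlockM

theorem s_procedure_general {N : ℕ}
    (A₁ A₂ : Matrix (Fin N) (Fin N) ℂ) (hA₁ : A₁.IsHermitian) (hA₂ : A₂.IsHermitian)
    (b₁ b₂ : Fin N → ℂ) (c₁ c₂ : ℝ)
    (hstrict : ∃ xhat : Fin N → ℂ, quadF A₁ b₁ c₁ xhat < 0) :
    (∀ x : Fin N → ℂ, quadF A₁ b₁ c₁ x ≤ 0 → quadF A₂ b₂ c₂ x ≤ 0) ↔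
      ∃ δ : ℝ, 0 ≤ δ ∧
        ((δ : ℂ) • blockM A₁ b₁ c₁ - blockM A₂ b₂ c₂).PosSemidef := by
  obtain ⟨xhat, hxhat⟩ := hstrict
  rw [quadF_eq_hermForm_blockM] at hxhat
  have hB₁ := blockM_isHermitian hA₁ b₁ c₁
  have hB₂ := blockM_isHermitian hA₂ b₂ c₂
  have hpsd (δ : ℝ) := posSemidef_iff_hermForm_nonneg ((hB₁.smul (conj_ofReal δ)).sub hB₂)
  simp only [hpsd, hermForm_sub, hermForm_ofReal_smul, sub_nonneg]
  constructor
  · intro H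
    have himp : ∀ y, hermForm (blockM A₁ b₁ c₁) y ≤ 0 → hermForm (blockM A₂ b₂ c₂) y ≤ 0 := by
      refine fun y => hermForm_nonpos_of_imp_of_apply_ne_zero hB₁ (i := Sum.inr ()) (by simp)
        hxhat fun y hy h₁ => ?_
      rw [hermForm_blockM_eq_mul_quadF _ _ _ hy] at h₁ ⊢
      exact mul_nonpos_of_nonneg_of_nonpos (by positivity)
        (H _ (nonpos_of_mul_nonpos_right h₁ (by positivity)))
    exact exists_nonneg_hermForm_le_mul_of_imp hB₁ hB₂ himp ⟨_, hxhat⟩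
  · rintro ⟨δ, hδ, hle⟩ x hx
    have h := hle (Sum.elim x fun _ => 1)
    rw [← quadF_eq_hermForm_blockM, ← quadF_eq_hermForm_blockM] at h
    exact h.trans (mul_nonpos_of_nonneg_of_nonpos hδ hx)

/-- S-Procedure: given Hermitian `A₁, A₂`, vectors `b₁, b₂`, reals `c₁, c₂`, and a point `xhat`
with `f₁(xhat) < 0`, the implication `f₁(x) ≤ 0 → f₂(x) ≤ 0` holds for all `x` iff there exists
`δ ≥ 0` such that `δ·[[A₁,b₁],[b₁ᴴ,c₁]] − [[A₂,b₂],[b₂ᴴ,c₂]]` is positive semidefinite. -/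
theorem s_procedure {N : ℕ} (hN : 1 ≤ N)
    (A₁ A₂ : Matrix (Fin N) (Fin N) ℂ) (hA₁ : A₁.IsHermitian) (hA₂ : A₂.IsHermitian)
    (b₁ b₂ : Fin N → ℂ) (c₁ c₂ : ℝ)
    (hstrict : ∃ xhat : Fin N → ℂ, quadF A₁ b₁ c₁ xhat < 0) :
    (∀ x : Fin N → ℂ, quadF A₁ b₁ c₁ x ≤ 0 → quadF A₂ b₂ c₂ x ≤ 0) ↔
      ∃ δ : ℝ, 0 ≤ δ ∧
        ((δ : ℂ) • blockM A₁ b₁ c₁ - blockM A₂ b₂ c₂).PosSemidef :=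
  s_procedure_general A₁ A₂ hA₁ hA₂ b₁ b₂ c₁ c₂ hstrict
end

section
/- Let N ≥ 1, let W̄, V̄ ∈ ℂ^{N×N} be Hermitian, ĝ ∈ ℂ^N, E ∈ ℝ, and let η > 0 and ε > 0. Then the robust harvested-power constraint 'for every Δg ∈ ℂ^N with Δgᴴ Δg ≤ ε², writing g = ĝ + Δg, one has −η · gᴴ (W̄ + V̄) g ≤ E' holds if and only if there exists φ ≥ 0 such that the (N+1)×(N+1) Hermitian matrix [[φ I_N + V̄, V̄ ĝ],[ĝᴴ V̄, −φ ε² + E/η + ĝᴴ V̄ ĝ]] + U_ĝᴴ W̄ U_ĝ is positive semidefinite, where U_ĝ = [I_N ĝ] ∈ ℂ^{N×(N+1)}. -/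
/-!
Write `x = (v, w) ∈ ℂᴺ ⊕ ℂ`. Substituting `Δg = v / w` homogenises the robust constraint into:
the form `P(x) = (v + w ĝ)ᴴ (W̄ + V̄) (v + w ĝ) + (E/η)|w|²` is nonnegative wherever
`B(x) = ε²|w|² − ‖v‖²` is. Since `SC10 … φ … = U_ĝᴴ (W̄ + V̄) U_ĝ + diag(φ I, E/η − φ ε²)`,
the quadratic form of the LMI matrix is `P − φ B`, so the theorem is the S-lemma for `B`,
which is strictly positive at `(0, 1)`.

The S-lemma holds over `ℂ` because the joint range `{(Re xᴴ P x, Re xᴴ Q x)}` is a convex cone: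
for `x, y` with `s` the sum of their images, a unimodular phase `ω` makes the cross-term
contribution of `x ± ω y` parallel to `s`, so both images are multiples `(1 ± t) s`, and one of the
two factors is positive. Separating this cone from the open quadrant `{p₁ < 0 < p₂}` by a line
gives the multiplier `φ`.
-/

open Matrix
open scoped ComplexOrder

/-- `U_ĝ = [I_N  ĝ]`, the `N×(N+1)` matrix whose first `N` columns form `I_N` and whose last
column is `ĝ`. -/
noncomputable def Ug {N : ℕ} (ghat : Fin N → ℂ) : Matrix (Fin N) (Fin N ⊕ Unit) ℂ :=
  Matrix.fromCols (1 : Matrix (Fin N) (Fin N) ℂ) (Matrix.replicateCol Unit ghat)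

/-- The LMI matrix `[[φ I_N + V̄, V̄ ĝ],[ĝᴴ V̄, −φ ε² + E/η + ĝᴴ V̄ ĝ]] + U_ĝᴴ W̄ U_ĝ`. -/
noncomputable def SC10 {N : ℕ} (W V : Matrix (Fin N) (Fin N) ℂ) (ghat : Fin N → ℂ)
    (E φ ε η : ℝ) : Matrix (Fin N ⊕ Unit) (Fin N ⊕ Unit) ℂ :=
  Matrix.fromBlocks
    ((φ : ℂ) • (1 : Matrix (Fin N) (Fin N) ℂ) + V)
    (Matrix.replicateCol Unit (V *ᵥ ghat))
    (Matrix.replicateRow Unit (star ghat ᵥ* V))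
    (Matrix.of fun _ _ => (-(φ * ε ^ 2) + E / η : ℂ) + star ghat ⬝ᵥ V *ᵥ ghat)
  + (Ug ghat)ᴴ * W * Ug ghat

open Complex in
lemma Complex.exists_normSq_eq_one_mul_re_eq_zero (e : ℂ) :
    ∃ ω : ℂ, normSq ω = 1 ∧ (ω * e).re = 0 := by
  refine ⟨exp (↑(Real.pi / 2 - arg e) * I), ?_, ?_⟩
  · rw [normSq_eq_norm_sq, norm_exp_ofReal_mul_I, one_pow]
  · nth_rw 2 [← norm_mul_exp_arg_mul_I e]
    rw [mul_left_comm, ← exp_add, ← add_mul, ← ofReal_add, sub_add_cancel, ofReal_div,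
      ofReal_ofNat, exp_pi_div_two_mul_I]
    simp

lemma Prod.exists_eq_smul_of_mul_eq_mul {s d : ℝ × ℝ} (hs : s ≠ 0) (h : s.2 * d.1 = s.1 * d.2) :
    ∃ t : ℝ, d = t • s := by
  have hn : s.1 ^ 2 + s.2 ^ 2 ≠ 0 := by
    contrapose! hs
    ext <;> simp only [Prod.fst_zero, Prod.snd_zero] <;> nlinarith [sq_nonneg s.1, sq_nonneg s.2]
  refine ⟨(s.1 * d.1 + s.2 * d.2) / (s.1 ^ 2 + s.2 ^ 2), ?_⟩
  ext <;> simp only [Prod.smul_fst, Prod.smul_snd, smul_eq_mul] <;> field_simp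
  · linear_combination s.2 * h
  · linear_combination -s.1 * h

lemma Set.mem_of_add_smul_mem_of_sub_smul_mem {𝕜 E : Type*} [Field 𝕜] [LinearOrder 𝕜]
    [IsStrictOrderedRing 𝕜] [AddCommGroup E] [Module 𝕜 E] {S : Set E}
    (hS : ∀ c : 𝕜, 0 < c → ∀ p ∈ S, c • p ∈ S) {s : E} {t : 𝕜}
    (h₁ : s + t • s ∈ S) (h₂ : s - t • s ∈ S) : s ∈ S := by
  have key : ∀ c : 𝕜, 0 < c → c • s ∈ S → s ∈ S := fun c hc h => by
    simpa [smul_smul, inv_mul_cancel₀ hc.ne'] using hS c⁻¹ (inv_pos.2 hc) _ h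
  rcases lt_or_ge 0 (1 + t) with ht | ht
  · exact key _ ht (by rwa [add_smul, one_smul])
  · exact key (1 - t) (by linarith) (by rwa [sub_smul, one_smul])

lemma ConvexCone.exists_nonneg_of_disjoint_quadrant (C : ConvexCone ℝ (ℝ × ℝ)) (h0 : C.Pointed)
    (hC : Disjoint (Set.Iio 0 ×ˢ Set.Ioi 0) (C : Set (ℝ × ℝ))) :
    ∃ a b : ℝ, 0 ≤ a ∧ b ≤ 0 ∧ b < a ∧ ∀ p ∈ C, 0 ≤ a * p.1 + b * p.2 := by
  obtain ⟨f, u, hfU, hfC⟩ := geometric_hahn_banach_open ((convex_Iio 0).prod (convex_Ioi 0))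
    (isOpen_Iio.prod isOpen_Ioi) C.convex hC
  have hu : u ≤ 0 := by simpa using hfC 0 h0
  have hf : ∀ p : ℝ × ℝ, f p = f (1, 0) * p.1 + f (0, 1) * p.2 := fun p => by
    conv_lhs => rw [show p = p.1 • ((1 : ℝ), (0 : ℝ)) + p.2 • ((0 : ℝ), (1 : ℝ)) by ext <;> simp]
    simp only [map_add, map_smul, smul_eq_mul]
    ring
  have hcl : ∀ p ∈ Set.Iic (0 : ℝ) ×ˢ Set.Ici (0 : ℝ), f p ≤ u := by
    rw [← closure_Iio, ← closure_Ioi, ← closure_prod_eq]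
    exact closure_minimal (fun p hp => (hfU p hp).le) (isClosed_le f.continuous continuous_const)
  refine ⟨f (1, 0), f (0, 1), ?_, ?_, ?_, fun p hp => ?_⟩
  · have := hcl (-1, 0) (by simp)
    rw [hf] at this
    linarith
  · have := hcl (0, 1) (by simp)
    rw [hf] at this
    linarith
  · have := hfU (-1, 1) (by simp)
    rw [hf] at this
    linarith
  · rw [← hf]
    by_contra! hp'
    have ht : 0 < u / f p + 1 := by
      have := div_nonneg_of_nonpos hu hp'.le
      linarith
    have := hfC _ (C.smul_mem ht hp)
    rw [map_smul, smul_eq_mul, add_mul, div_mul_cancel₀ _ hp'.ne, one_mul] at this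
    linarith

lemma Sum.forall_elim_unit {α β : Type*} {p : (α ⊕ Unit → β) → Prop} :
    (∀ x, p x) ↔ ∀ v b, p (Sum.elim v fun _ => b) := by
  refine ⟨fun h v b => h _, fun h x => ?_⟩
  convert h (x ∘ Sum.inl) (x (Sum.inr ()))
  ext (i | i) <;> rfl

namespace Matrix

variable {m k : Type*} [Fintype m] [Fintype k]

noncomputable def reQuad (M : Matrix m m ℂ) (x : m → ℂ) : ℝ := (star x ⬝ᵥ M *ᵥ x).re

lemma reQuad_add_smul (M : Matrix m m ℂ) (x y : m → ℂ) (c : ℂ) :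
    reQuad M (x + c • y) = reQuad M x + Complex.normSq c * reQuad M y
      + (c * (star x ⬝ᵥ M *ᵥ y + star (star y ⬝ᵥ M *ᵥ x))).re := by
  simp only [reQuad, star_add, star_smul, mulVec_add, mulVec_smul, add_dotProduct,
    dotProduct_add, smul_dotProduct, dotProduct_smul, smul_eq_mul, Complex.star_def,
    Complex.add_re, Complex.mul_re, Complex.conj_re, Complex.conj_im, Complex.normSq_apply,
    Complex.add_im, Complex.mul_im]
  ring

lemma reQuad_smul (M : Matrix m m ℂ) (c : ℂ) (x : m → ℂ) :
    reQuad M (c • x) = Complex.normSq c * reQuad M x := by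
  simpa [reQuad] using reQuad_add_smul M 0 x c

lemma reQuad_add (A B : Matrix m m ℂ) (x : m → ℂ) :
    reQuad (A + B) x = reQuad A x + reQuad B x := by
  simp [reQuad, add_mulVec]

lemma reQuad_one [DecidableEq m] (v : m → ℂ) : reQuad 1 v = (star v ⬝ᵥ v).re := by
  simp [reQuad]

lemma reQuad_ofReal_smul_one [DecidableEq m] (c : ℝ) (v : m → ℂ) :
    reQuad ((c : ℂ) • 1) v = c * (star v ⬝ᵥ v).re := by
  simp [reQuad, smul_mulVec]

lemma reQuad_of_const_unit (c : ℝ) (w : ℂ) :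
    reQuad (of fun _ _ => (c : ℂ) : Matrix Unit Unit ℂ) (fun _ => w) = c * Complex.normSq w := by
  simp only [reQuad, dotProduct, mulVec, Fintype.sum_unique, of_apply, Pi.star_apply]
  rw [mul_left_comm, Complex.star_def, ← Complex.normSq_eq_conj_mul_self, ← Complex.ofReal_mul,
    Complex.ofReal_re]

lemma reQuad_conjTranspose_mul_mul (A : Matrix k m ℂ) (M : Matrix k k ℂ) (x : m → ℂ) :
    reQuad (Aᴴ * M * A) x = reQuad M (A *ᵥ x) := by
  rw [reQuad, reQuad, ← mulVec_mulVec, ← mulVec_mulVec, dotProduct_mulVec, ← star_mulVec]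

lemma reQuad_fromBlocks_zero (A : Matrix m m ℂ) (D : Matrix k k ℂ) (v : m → ℂ) (w : k → ℂ) :
    reQuad (fromBlocks A 0 0 D) (Sum.elim v w) = reQuad A v + reQuad D w := by
  simp [reQuad, fromBlocks_mulVec, Function.star_sumElim, sumElim_dotProduct_sumElim]

lemma IsHermitian.posSemidef_iff_reQuad_nonneg {M : Matrix m m ℂ} (hM : M.IsHermitian) :
    M.PosSemidef ↔ ∀ x, 0 ≤ reQuad M x := by
  simp only [posSemidef_iff_dotProduct_mulVec, hM, true_and, Complex.nonneg_iff, reQuad]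
  exact forall_congr' fun x => and_iff_left (hM.im_star_dotProduct_mulVec_self x).symm

section JointRange

variable (P Q : Matrix m m ℂ)

lemma smul_mem_range_reQuad_pair {c : ℝ} (hc : 0 < c) {p : ℝ × ℝ}
    (hp : p ∈ Set.range fun x => (reQuad P x, reQuad Q x)) :
    c • p ∈ Set.range fun x => (reQuad P x, reQuad Q x) := by
  obtain ⟨x, rfl⟩ := hp
  refine ⟨(√c : ℂ) • x, ?_⟩
  simp only [reQuad_smul, Complex.normSq_ofReal, Real.mul_self_sqrt hc.le, Prod.smul_mk,
    smul_eq_mul]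

lemma reQuad_pair_add_mem_range (x y : m → ℂ) :
    (reQuad P x, reQuad Q x) + (reQuad P y, reQuad Q y)
      ∈ Set.range fun z => (reQuad P z, reQuad Q z) := by
  set s := (reQuad P x, reQuad Q x) + (reQuad P y, reQuad Q y) with hs_def
  rcases eq_or_ne s 0 with hs | hs
  · exact ⟨0, by simp [hs, reQuad]⟩
  set κP := star x ⬝ᵥ P *ᵥ y + star (star y ⬝ᵥ P *ᵥ x)
  set κQ := star x ⬝ᵥ Q *ᵥ y + star (star y ⬝ᵥ Q *ᵥ x)
  have hrot : ∀ c : ℂ, Complex.normSq c = 1 →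
      (reQuad P (x + c • y), reQuad Q (x + c • y)) = s + ((c * κP).re, (c * κQ).re) :=
    fun c hc => by
      rw [reQuad_add_smul, reQuad_add_smul, hc, one_mul, one_mul, hs_def]
      ext <;> simp only [Prod.fst_add, Prod.snd_add] <;> ring
  obtain ⟨ω, hω, hωκ⟩ :=
    Complex.exists_normSq_eq_one_mul_re_eq_zero (s.2 * κP - s.1 * κQ)
  obtain ⟨t, ht⟩ := Prod.exists_eq_smul_of_mul_eq_mul (d := ((ω * κP).re, (ω * κQ).re)) hs (by
    simp only [mul_sub, Complex.sub_re, mul_left_comm ω, Complex.re_ofReal_mul] at hωκ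
    simpa [sub_eq_zero] using hωκ)
  refine Set.mem_of_add_smul_mem_of_sub_smul_mem
    (fun _ hc _ hp => smul_mem_range_reQuad_pair P Q hc hp) (t := t) ?_ ?_
  · exact ⟨x + ω • y, (hrot ω hω).trans (by rw [ht])⟩
  · refine ⟨x + (-ω) • y, (hrot (-ω) (by rwa [Complex.normSq_neg])).trans ?_⟩
    rw [← ht, sub_eq_add_neg]
    simp

noncomputable def jointReQuadRange : ConvexCone ℝ (ℝ × ℝ) where
  carrier := Set.range fun x => (reQuad P x, reQuad Q x)
  smul_mem' _ hc _ hp := smul_mem_range_reQuad_pair P Q hc hp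
  add_mem' := by
    rintro _ ⟨x, rfl⟩ _ ⟨y, rfl⟩
    exact reQuad_pair_add_mem_range P Q x y

lemma jointReQuadRange_pointed : (jointReQuadRange P Q).Pointed :=
  ⟨0, by simp [reQuad]⟩

end JointRange

theorem s_lemma {P Q : Matrix m m ℂ} {x₀ : m → ℂ} (hx₀ : 0 < reQuad Q x₀) :
    (∀ x, 0 ≤ reQuad Q x → 0 ≤ reQuad P x) ↔
      ∃ φ : ℝ, 0 ≤ φ ∧ ∀ x, φ * reQuad Q x ≤ reQuad P x := by
  refine ⟨fun h => ?_, fun ⟨φ, hφ, h⟩ x hx => (mul_nonneg hφ hx).trans (h x)⟩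
  have hdisj : Disjoint (Set.Iio 0 ×ˢ Set.Ioi 0) (jointReQuadRange P Q : Set (ℝ × ℝ)) := by
    refine Set.disjoint_left.mpr ?_
    rintro _ ⟨hP, hQ⟩ ⟨x, rfl⟩
    exact (h x hQ.le).not_gt hP
  obtain ⟨a, b, ha, hb, hba, hab⟩ :=
    (jointReQuadRange P Q).exists_nonneg_of_disjoint_quadrant (jointReQuadRange_pointed P Q) hdisj
  have hab' : ∀ x, 0 ≤ a * reQuad P x + b * reQuad Q x := fun x => hab _ ⟨x, rfl⟩
  have ha' : 0 < a := by
    refine ha.lt_of_ne fun ha0 => ?_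
    have := hab' x₀
    rw [← ha0] at hba this
    nlinarith
  refine ⟨-b / a, div_nonneg (neg_nonneg.2 hb) ha'.le, fun x => ?_⟩
  rw [div_mul_eq_mul_div, div_le_iff₀ ha']
  linarith [hab' x]

lemma forall_ball_iff_forall_homogeneous (M : Matrix m m ℂ) (g : m → ℂ) (ε c : ℝ) :
    (∀ Δ : m → ℂ, (star Δ ⬝ᵥ Δ).re ≤ ε ^ 2 → 0 ≤ reQuad M (g + Δ) + c) ↔
      ∀ (v : m → ℂ) (w : ℂ), (star v ⬝ᵥ v).re ≤ ε ^ 2 * Complex.normSq w →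
        0 ≤ reQuad M (v + w • g) + c * Complex.normSq w := by
  classical
  refine ⟨fun h v w hvw => ?_, fun h Δ hΔ => by simpa [add_comm] using h Δ 1 (by simpa using hΔ)⟩
  rcases eq_or_ne w 0 with rfl | hw
  · have hv : star v ⬝ᵥ v = 0 :=
      le_antisymm (Complex.le_def.mpr ⟨by simpa using hvw,
        (Complex.nonneg_iff.mp (dotProduct_star_self_nonneg v)).2.symm⟩)
        (dotProduct_star_self_nonneg v)
    simp [dotProduct_star_self_eq_zero.mp hv, reQuad]
  · have hnw : 0 < Complex.normSq w := Complex.normSq_pos.mpr hw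
    have hball : (star (w⁻¹ • v) ⬝ᵥ (w⁻¹ • v)).re ≤ ε ^ 2 := by
      rw [← reQuad_one, reQuad_smul, reQuad_one, map_inv₀, inv_mul_le_iff₀ hnw]
      linarith
    have hscale : v + w • g = w • (g + w⁻¹ • v) := by
      rw [smul_add, smul_smul, mul_inv_cancel₀ hw, one_smul, add_comm]
    rw [hscale, reQuad_smul, mul_comm c, ← mul_add]
    exact mul_nonneg hnw.le (by simpa [add_comm] using h _ hball)

end Matrix

section LMI

variable {N : ℕ}

lemma conjTranspose_Ug_mul_mul_Ug (M : Matrix (Fin N) (Fin N) ℂ) (ghat : Fin N → ℂ) :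
    (Ug ghat)ᴴ * M * Ug ghat =
      fromBlocks M (replicateCol Unit (M *ᵥ ghat)) (replicateRow Unit (star ghat ᵥ* M))
        (of fun _ _ => star ghat ⬝ᵥ M *ᵥ ghat) := by
  rw [Ug, conjTranspose_fromCols_eq_fromRows_conjTranspose, fromRows_mul, fromRows_mul_fromCols,
    conjTranspose_one, conjTranspose_replicateCol, Matrix.mul_one, Matrix.mul_one,
    ← replicateCol_mulVec, ← replicateRow_vecMul, replicateRow_mul_replicateCol,
    dotProduct_mulVec, Matrix.one_mul]

lemma SC10_eq_add_fromBlocks (W V : Matrix (Fin N) (Fin N) ℂ) (ghat : Fin N → ℂ)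
    (E φ ε η : ℝ) :
    SC10 W V ghat E φ ε η = (Ug ghat)ᴴ * (W + V) * Ug ghat +
      fromBlocks ((φ : ℂ) • 1) 0 0 (of fun _ _ => ((-(φ * ε ^ 2) + E / η : ℝ) : ℂ)) := by
  rw [SC10, Matrix.mul_add, Matrix.add_mul, conjTranspose_Ug_mul_mul_Ug V,
    add_comm _ (fromBlocks _ _ _ _), add_comm ((Ug ghat)ᴴ * W * _), ← add_assoc, fromBlocks_add,
    zero_add, zero_add, of_add_of]
  congr 3
  push_cast
  rfl

lemma Ug_mulVec_sumElim (ghat v : Fin N → ℂ) (w : ℂ) :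
    Ug ghat *ᵥ Sum.elim v (fun _ => w) = v + w • ghat := by
  rw [Ug, fromCols_mulVec_sumElim, one_mulVec]
  ext i
  simp [mulVec, dotProduct, mul_comm]

lemma reQuad_SC10 (W V : Matrix (Fin N) (Fin N) ℂ) (ghat v : Fin N → ℂ) (w : ℂ)
    (E φ ε η : ℝ) :
    reQuad (SC10 W V ghat E φ ε η) (Sum.elim v fun _ => w) = reQuad (W + V) (v + w • ghat)
      + φ * (star v ⬝ᵥ v).re + (-(φ * ε ^ 2) + E / η) * Complex.normSq w := by
  rw [SC10_eq_add_fromBlocks, reQuad_add, reQuad_conjTranspose_mul_mul, Ug_mulVec_sumElim,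
    reQuad_fromBlocks_zero, reQuad_ofReal_smul_one, reQuad_of_const_unit, add_assoc]

lemma isHermitian_SC10 {W V : Matrix (Fin N) (Fin N) ℂ} (hW : W.IsHermitian)
    (hV : V.IsHermitian) (ghat : Fin N → ℂ) (E φ ε η : ℝ) :
    (SC10 W V ghat E φ ε η).IsHermitian := by
  rw [SC10_eq_add_fromBlocks]
  refine (isHermitian_conjTranspose_mul_mul _ (hW.add hV)).add
    (IsHermitian.fromBlocks ?_ (by simp) ?_)
  · simp [IsHermitian, conjTranspose_smul]
  · ext; simp

noncomputable def ballGram (N : ℕ) (ε : ℝ) : Matrix (Fin N ⊕ Unit) (Fin N ⊕ Unit) ℂ :=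
  fromBlocks (-1) 0 0 (of fun _ _ => ((ε ^ 2 : ℝ) : ℂ))

lemma reQuad_ballGram (ε : ℝ) (v : Fin N → ℂ) (w : ℂ) :
    reQuad (ballGram N ε) (Sum.elim v fun _ => w)
      = ε ^ 2 * Complex.normSq w - (star v ⬝ᵥ v).re := by
  rw [ballGram, reQuad_fromBlocks_zero, reQuad_of_const_unit, add_comm, sub_eq_add_neg]
  simp [reQuad, neg_mulVec]

end LMI

theorem robust_harvested_power_lmi_general {N : ℕ}
    (W V : Matrix (Fin N) (Fin N) ℂ) (hW : W.IsHermitian) (hV : V.IsHermitian)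
    (ghat : Fin N → ℂ) (E : ℝ) (η ε : ℝ) (hη : 0 < η) (hε : 0 < ε) :
    (∀ Δg : Fin N → ℂ, (star Δg ⬝ᵥ Δg).re ≤ ε ^ 2 →
        -η * (star (ghat + Δg) ⬝ᵥ (W + V) *ᵥ (ghat + Δg)).re ≤ E) ↔
      ∃ φ : ℝ, 0 ≤ φ ∧ (SC10 W V ghat E φ ε η).PosSemidef := by
  set P := SC10 W V ghat E 0 ε η
  have hP : ∀ v w, reQuad P (Sum.elim v fun _ => w)
      = reQuad (W + V) (v + w • ghat) + E / η * Complex.normSq w := fun v w => by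
    simp [P, reQuad_SC10]
  have hSC10 : ∀ φ x,
      reQuad (SC10 W V ghat E φ ε η) x = reQuad P x - φ * reQuad (ballGram N ε) x := by
    refine fun φ => Sum.forall_elim_unit.mpr fun v w => ?_
    rw [reQuad_SC10, hP, reQuad_ballGram]
    ring
  have hslater : 0 < reQuad (ballGram N ε) (Sum.elim 0 fun _ => 1) := by
    simp [reQuad_ballGram, hε]
  calc _ ↔ ∀ Δg : Fin N → ℂ, (star Δg ⬝ᵥ Δg).re ≤ ε ^ 2 →
          0 ≤ reQuad (W + V) (ghat + Δg) + E / η := by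
        refine forall₂_congr fun Δg _ => ?_
        rw [reQuad, ← mul_nonneg_iff_of_pos_left hη, mul_add, mul_div_cancel₀ _ hη.ne']
        constructor <;> intro <;> linarith
    _ ↔ ∀ x, 0 ≤ reQuad (ballGram N ε) x → 0 ≤ reQuad P x := by
        rw [forall_ball_iff_forall_homogeneous, Sum.forall_elim_unit]
        simp only [hP, reQuad_ballGram, sub_nonneg]
    _ ↔ ∃ φ : ℝ, 0 ≤ φ ∧ ∀ x, φ * reQuad (ballGram N ε) x ≤ reQuad P x := s_lemma hslater
    _ ↔ _ := exists_congr fun φ => and_congr_right fun _ => by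
        simp only [(isHermitian_SC10 hW hV ghat E φ ε η).posSemidef_iff_reQuad_nonneg, hSC10,
          sub_nonneg]

/-- S-procedure form of the robust harvested-power constraint: the robust constraint
`−η · gᴴ (W̄ + V̄) g ≤ E` for all `g = ĝ + Δg` with `‖Δg‖² ≤ ε²` holds iff there exists
`φ ≥ 0` making the associated LMI matrix positive semidefinite. -/
theorem robust_harvested_power_lmi {N : ℕ} (hN : 1 ≤ N)
    (W V : Matrix (Fin N) (Fin N) ℂ) (hW : W.IsHermitian) (hV : V.IsHermitian)
    (ghat : Fin N → ℂ) (E : ℝ) (η ε : ℝ) (hη : 0 < η) (hε : 0 < ε) :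
    (∀ Δg : Fin N → ℂ, (star Δg ⬝ᵥ Δg).re ≤ ε ^ 2 →
        -η * (star (ghat + Δg) ⬝ᵥ (W + V) *ᵥ (ghat + Δg)).re ≤ E) ↔
      ∃ φ : ℝ, 0 ≤ φ ∧ (SC10 W V ghat E φ ε η).PosSemidef :=
  robust_harvested_power_lmi_general W V hW hV ghat E η ε hη hε
end

section
/- The infimum over (w, V) ∈ F of the total transmit power ‖w‖² + Tr(V) equals the infimum over (W̄, V̄, ξ) ∈ F' of 1/ξ. In particular, every (w, V) ∈ F satisfies ‖w‖² + Tr(V) > 0 and, setting ξ₀ = 1/(‖w‖² + Tr(V)), the point (ξ₀ w wᴴ, ξ₀ V, ξ₀) belongs to F' with objective value 1/ξ₀ = ‖w‖² + Tr(V); conversely, every (W̄, V̄, ξ) ∈ F' has ξ > 0 and, writing W̄/ξ = w̄ w̄ᴴ for some w̄ ∈ ℂ^{N_T} (possible since W̄ is positive semidefinite of rank one), the pair (w̄, V̄/ξ) belongs to F with ‖w̄‖² + Tr(V̄/ξ) = 1/ξ. -/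
open Matrix
open scoped ComplexOrder

/-- The original feasible set `F`: pairs `(w, V)` with `V` Hermitian PSD satisfying the
SINR constraint C1 of the desired receiver, the robust eavesdropper constraints C2 and C3,
and the power constraint C4. -/
def FeasOrig {NT K J : ℕ} (h : Fin NT → ℂ)
    (ghat : Fin (K - 1) → Fin NT → ℂ) (lhat : Fin J → Fin NT → ℂ)
    (Γreq σz2 Pmax σPU2 : ℝ) (Γtol σzk2 ε : Fin (K - 1) → ℝ) (ΓtolPU υ : Fin J → ℝ)
    (w : Fin NT → ℂ) (V : Matrix (Fin NT) (Fin NT) ℂ) : Prop :=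
  V.PosSemidef ∧
  Γreq * ((Matrix.vecMulVec h (star h) * V).trace.re + σz2) ≤
      (star w ⬝ᵥ Matrix.vecMulVec h (star h) *ᵥ w).re ∧
  (∀ k, ∀ Δg : Fin NT → ℂ, (star Δg ⬝ᵥ Δg).re ≤ ε k ^ 2 →
      ‖star (ghat k + Δg) ⬝ᵥ w‖ ^ 2 ≤
        Γtol k * ((star (ghat k + Δg) ⬝ᵥ V *ᵥ (ghat k + Δg)).re + σzk2 k)) ∧
  (∀ j, ∀ Δl : Fin NT → ℂ, (star Δl ⬝ᵥ Δl).re ≤ υ j ^ 2 →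
      ‖star (lhat j + Δl) ⬝ᵥ w‖ ^ 2 ≤
        ΓtolPU j * ((star (lhat j + Δl) ⬝ᵥ V *ᵥ (lhat j + Δl)).re + σPU2)) ∧
  (star w ⬝ᵥ w).re + V.trace.re ≤ Pmax

/-- The Charnes–Cooper transformed feasible set `F'`: triples `(W̄, V̄, ξ)` with `W̄, V̄`
Hermitian PSD, `ξ ≥ 0`, `rank W̄ = 1`, the transformed constraints, the transformed power
constraint, and the normalization `Tr(W̄) + Tr(V̄) = 1`. -/
def FeasTrans {NT K J : ℕ} (h : Fin NT → ℂ)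
    (ghat : Fin (K - 1) → Fin NT → ℂ) (lhat : Fin J → Fin NT → ℂ)
    (Γreq σz2 Pmax σPU2 : ℝ) (Γtol σzk2 ε : Fin (K - 1) → ℝ) (ΓtolPU υ : Fin J → ℝ)
    (Wb Vb : Matrix (Fin NT) (Fin NT) ℂ) (ξ : ℝ) : Prop :=
  Wb.PosSemidef ∧ Vb.PosSemidef ∧ 0 ≤ ξ ∧ Wb.rank = 1 ∧
  Γreq * ((Matrix.vecMulVec h (star h) * Vb).trace.re + σz2 * ξ) ≤
      (Matrix.vecMulVec h (star h) * Wb).trace.re ∧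
  (∀ k, ∀ Δg : Fin NT → ℂ, (star Δg ⬝ᵥ Δg).re ≤ ε k ^ 2 →
      (star (ghat k + Δg) ⬝ᵥ Wb *ᵥ (ghat k + Δg)).re ≤
        Γtol k * ((star (ghat k + Δg) ⬝ᵥ Vb *ᵥ (ghat k + Δg)).re + σzk2 k * ξ)) ∧
  (∀ j, ∀ Δl : Fin NT → ℂ, (star Δl ⬝ᵥ Δl).re ≤ υ j ^ 2 →
      (star (lhat j + Δl) ⬝ᵥ Wb *ᵥ (lhat j + Δl)).re ≤
        ΓtolPU j * ((star (lhat j + Δl) ⬝ᵥ Vb *ᵥ (lhat j + Δl)).re + σPU2 * ξ)) ∧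
  Wb.trace.re + Vb.trace.re ≤ Pmax * ξ ∧
  Wb.trace.re + Vb.trace.re = 1

/-! The Charnes–Cooper substitution `(W̄, V̄, ξ) = c • (w wᴴ, V, 1)` with `c > 0` maps each
constraint of `F` to the corresponding constraint of `F'`, since both sides of every inequality
scale by `c`; the normalisation `Tr W̄ + Tr V̄ = 1` then pins down `c = 1 / (‖w‖² + Tr V)`, so the
objectives agree. Feasible `w` is nonzero because the desired receiver's SINR is positive, which
makes `w wᴴ` of rank one. Conversely `ξ > 0` because `1 = Tr W̄ + Tr V̄ ≤ Pmax ξ`, and the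
positive semidefinite rank-one matrix `W̄ / ξ` is `w̄ w̄ᴴ` by the spectral theorem. -/

namespace Matrix

variable {n : Type*}

theorem ofReal_smul_vecMulVec_self_star {𝕜 : Type*} [RCLike 𝕜] {c : ℝ} (hc : 0 ≤ c)
    (w : n → 𝕜) :
    (c : 𝕜) • vecMulVec w (star w) = vecMulVec ((√c : 𝕜) • w) (star ((√c : 𝕜) • w)) := by
  rw [star_smul, smul_vecMulVec, vecMulVec_smul, smul_smul, RCLike.star_def, RCLike.conj_ofReal,
    ← RCLike.ofReal_mul, Real.mul_self_sqrt hc]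

theorem posSemidef_ofReal_smul_iff {c : ℝ} (hc : 0 < c) {M : Matrix n n ℂ} :
    ((c : ℂ) • M).PosSemidef ↔ M.PosSemidef := by
  have hc' : (0 : ℂ) < c := by exact_mod_cast hc
  refine ⟨fun h => ?_, fun h => h.smul hc'.le⟩
  simpa only [inv_smul_smul₀ hc'.ne'] using h.smul (inv_nonneg.2 hc'.le)

variable [Fintype n]

theorem trace_mul_vecMulVec {R : Type*} [CommSemiring R] (M : Matrix n n R) (x y : n → R) :
    (M * vecMulVec x y).trace = y ⬝ᵥ M *ᵥ x := by
  rw [mul_vecMulVec, trace_vecMulVec, dotProduct_comm]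

theorem re_star_dotProduct_vecMulVec_mulVec (w g : n → ℂ) :
    (star g ⬝ᵥ vecMulVec w (star w) *ᵥ g).re = ‖star g ⬝ᵥ w‖ ^ 2 := by
  rw [vecMulVec_mulVec, op_smul_eq_smul, dotProduct_smul, smul_eq_mul,
    star_dotProduct w g, mul_comm, Complex.star_def, Complex.mul_conj, Complex.sq_norm,
    Complex.ofReal_re]

theorem rank_vecMulVec_self_star {𝕜 : Type*} [RCLike 𝕜] {w : n → 𝕜} (hw : w ≠ 0) :
    (vecMulVec w (star w)).rank = 1 := by
  have hrange : LinearMap.range (vecMulVec w (star w)).mulVecLin = 𝕜 ∙ w := by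
    apply le_antisymm
    · rintro _ ⟨x, rfl⟩
      rw [mulVecLin_apply, vecMulVec_mulVec, op_smul_eq_smul]
      exact Submodule.smul_mem _ _ (Submodule.mem_span_singleton_self w)
    · rw [Submodule.span_singleton_le_iff_mem]
      refine ⟨(star w ⬝ᵥ w)⁻¹ • w, ?_⟩
      rw [mulVecLin_apply, mulVec_smul, vecMulVec_mulVec, op_smul_eq_smul, smul_smul,
        inv_mul_cancel₀ (dotProduct_star_self_pos_iff.2 hw).ne', one_smul]
  rw [Matrix.rank, hrange, finrank_span_singleton hw]

theorem IsHermitian.eq_sum_smul_vecMulVec {𝕜 : Type*} [RCLike 𝕜] [DecidableEq n]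
    {A : Matrix n n 𝕜} (hA : A.IsHermitian) :
    A = ∑ i, (hA.eigenvalues i : 𝕜) •
      vecMulVec (hA.eigenvectorBasis i) (star (hA.eigenvectorBasis i)) := by
  conv_lhs => rw [hA.spectral_theorem]
  ext i j
  rw [Unitary.conjStarAlgAut_apply, Matrix.mul_apply, Matrix.sum_apply]
  refine Finset.sum_congr rfl fun k _ => ?_
  simp only [mul_diagonal, star_apply, IsHermitian.eigenvectorUnitary_apply, Function.comp_apply,
    smul_apply, vecMulVec_apply, Pi.star_apply]
  ring

theorem PosSemidef.exists_eq_vecMulVec_of_rank_eq_one {𝕜 : Type*} [RCLike 𝕜]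
    {A : Matrix n n 𝕜} (hA : A.PosSemidef) (hr : A.rank = 1) :
    ∃ w : n → 𝕜, A = vecMulVec w (star w) := by
  classical
  obtain ⟨⟨i₀, _⟩, huniq⟩ :=
    Fintype.card_eq_one_iff.mp (hA.isHermitian.rank_eq_card_non_zero_eigs.symm.trans hr)
  have hzero : ∀ i ≠ i₀, hA.isHermitian.eigenvalues i = 0 := fun i hi => by
    by_contra h
    exact hi (congrArg Subtype.val (huniq ⟨i, h⟩))
  rw [hA.isHermitian.eq_sum_smul_vecMulVec,
    Finset.sum_eq_single i₀ (fun i _ hi => by simp [hzero i hi]) (by simp)]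
  exact ⟨_, ofReal_smul_vecMulVec_self_star (hA.eigenvalues_nonneg i₀) _⟩

end Matrix

section Scaling

variable {α : Type*} [Field α] [LinearOrder α] [IsStrictOrderedRing α] {c : α}

theorem mul_le_mul_add_mul_iff (hc : 0 < c) (a b s Γ : α) :
    c * a ≤ Γ * (c * b + s * c) ↔ a ≤ Γ * (b + s) := by
  rw [show Γ * (c * b + s * c) = c * (Γ * (b + s)) by ring, mul_le_mul_iff_right₀ hc]

theorem mul_add_mul_le_mul_iff (hc : 0 < c) (a b s Γ : α) :
    Γ * (c * b + s * c) ≤ c * a ↔ Γ * (b + s) ≤ a := by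
  rw [show Γ * (c * b + s * c) = c * (Γ * (b + s)) by ring, mul_le_mul_iff_right₀ hc]

end Scaling

section PowerMinimization

variable {NT K J : ℕ} {h : Fin NT → ℂ} {ghat : Fin (K - 1) → Fin NT → ℂ}
  {lhat : Fin J → Fin NT → ℂ} {Γreq σz2 Pmax σPU2 : ℝ} {Γtol σzk2 ε : Fin (K - 1) → ℝ}
  {ΓtolPU υ : Fin J → ℝ}

local notation "𝓕" => FeasOrig h ghat lhat Γreq σz2 Pmax σPU2 Γtol σzk2 ε ΓtolPU υ
local notation "𝓕'" => FeasTrans h ghat lhat Γreq σz2 Pmax σPU2 Γtol σzk2 ε ΓtolPU υ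

theorem feasTrans_smul_iff {c : ℝ} (hc : 0 < c) {w : Fin NT → ℂ} (hw : w ≠ 0)
    (V : Matrix (Fin NT) (Fin NT) ℂ) :
    𝓕' ((c : ℂ) • vecMulVec w (star w)) ((c : ℂ) • V) c ↔
      𝓕 w V ∧ c * ((star w ⬝ᵥ w).re + V.trace.re) = 1 := by
  have hrank : ((c : ℂ) • vecMulVec w (star w)).rank = 1 := by
    rw [rank_smul_of_mem_nonZeroDivisors _
      (mem_nonZeroDivisors_of_ne_zero (by exact_mod_cast hc.ne')), rank_vecMulVec_self_star hw]
  have hpsd : ((c : ℂ) • vecMulVec w (star w)).PosSemidef :=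
    (posSemidef_ofReal_smul_iff hc).2 (posSemidef_vecMulVec_self_star w)
  simp only [FeasTrans, FeasOrig, hrank, hpsd, posSemidef_ofReal_smul_iff hc, hc.le, true_and,
    Matrix.mul_smul, trace_smul, smul_mulVec, dotProduct_smul, smul_eq_mul, Complex.re_ofReal_mul,
    trace_mul_vecMulVec, re_star_dotProduct_vecMulVec_mulVec, trace_vecMulVec,
    dotProduct_comm w (star w), mul_le_mul_add_mul_iff hc, mul_add_mul_le_mul_iff hc,
    ← mul_add, mul_comm Pmax c, mul_le_mul_iff_right₀ hc, and_assoc]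

theorem FeasOrig.ne_zero (hΓreq : 0 < Γreq) (hσz : 0 < σz2) {w : Fin NT → ℂ}
    {V : Matrix (Fin NT) (Fin NT) ℂ} (hF : 𝓕 w V) : w ≠ 0 := by
  rintro rfl
  obtain ⟨hV, hsinr, -⟩ := hF
  have hHV : 0 ≤ (vecMulVec h (star h) * V).trace.re := by
    rw [trace_mul_comm, trace_mul_vecMulVec]
    exact hV.re_dotProduct_nonneg h
  simp only [mulVec_zero, dotProduct_zero, Complex.zero_re] at hsinr
  nlinarith

theorem FeasOrig.totalPower_pos (hΓreq : 0 < Γreq) (hσz : 0 < σz2) {w : Fin NT → ℂ}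
    {V : Matrix (Fin NT) (Fin NT) ℂ} (hF : 𝓕 w V) : 0 < (star w ⬝ᵥ w).re + V.trace.re :=
  add_pos_of_pos_of_nonneg
    (Complex.pos_iff.1 (dotProduct_star_self_pos_iff.2 (hF.ne_zero hΓreq hσz))).1
    (Complex.nonneg_iff.1 hF.1.trace_nonneg).1

theorem FeasOrig.feasTrans_smul_inv (hΓreq : 0 < Γreq) (hσz : 0 < σz2) {w : Fin NT → ℂ}
    {V : Matrix (Fin NT) (Fin NT) ℂ} (hF : 𝓕 w V) :
    𝓕' (((((star w ⬝ᵥ w).re + V.trace.re)⁻¹ : ℝ) : ℂ) • vecMulVec w (star w))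
      (((((star w ⬝ᵥ w).re + V.trace.re)⁻¹ : ℝ) : ℂ) • V)
      ((star w ⬝ᵥ w).re + V.trace.re)⁻¹ :=
  have hP := hF.totalPower_pos hΓreq hσz
  (feasTrans_smul_iff (inv_pos.2 hP) (hF.ne_zero hΓreq hσz) V).2 ⟨hF, inv_mul_cancel₀ hP.ne'⟩

theorem FeasTrans.pos {Wb Vb : Matrix (Fin NT) (Fin NT) ℂ} {ξ : ℝ} (hT : 𝓕' Wb Vb ξ) :
    0 < ξ := by
  obtain ⟨-, -, hξ, -, -, -, -, hpow, hnorm⟩ := hT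
  refine hξ.lt_of_ne ?_
  rintro rfl
  rw [mul_zero] at hpow
  linarith

theorem FeasTrans.exists_feasOrig {Wb Vb : Matrix (Fin NT) (Fin NT) ℂ} {ξ : ℝ}
    (hT : 𝓕' Wb Vb ξ) :
    ∃ wbar : Fin NT → ℂ, (ξ : ℂ)⁻¹ • Wb = vecMulVec wbar (star wbar) ∧
      𝓕 wbar ((ξ : ℂ)⁻¹ • Vb) ∧ (star wbar ⬝ᵥ wbar).re + ((ξ : ℂ)⁻¹ • Vb).trace.re = 1 / ξ := by
  have hξ := hT.pos
  have hξ' : (ξ : ℂ) ≠ 0 := by exact_mod_cast hξ.ne'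
  have hrank : ((ξ : ℂ)⁻¹ • Wb).rank = 1 := by
    rw [rank_smul_of_mem_nonZeroDivisors _ (mem_nonZeroDivisors_of_ne_zero (inv_ne_zero hξ')),
      hT.2.2.2.1]
  have hpsd : ((ξ : ℂ)⁻¹ • Wb).PosSemidef := by
    rw [← Complex.ofReal_inv, posSemidef_ofReal_smul_iff (inv_pos.2 hξ)]
    exact hT.1
  obtain ⟨wbar, hwbar⟩ := hpsd.exists_eq_vecMulVec_of_rank_eq_one hrank
  have hw : wbar ≠ 0 := by
    rintro rfl
    rw [hwbar, zero_vecMulVec, rank_zero] at hrank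
    exact zero_ne_one hrank
  rw [← smul_inv_smul₀ hξ' Wb, hwbar, ← smul_inv_smul₀ hξ' Vb] at hT
  obtain ⟨hF, hnorm⟩ := (feasTrans_smul_iff hξ hw _).1 hT
  exact ⟨wbar, hwbar, hF, eq_one_div_of_mul_eq_one_right hnorm⟩

end PowerMinimization

theorem power_min_equiv_general {NT K J : ℕ} (h : Fin NT → ℂ)
    (ghat : Fin (K - 1) → Fin NT → ℂ) (lhat : Fin J → Fin NT → ℂ)
    (Γreq σz2 Pmax σPU2 : ℝ) (Γtol σzk2 ε : Fin (K - 1) → ℝ) (ΓtolPU υ : Fin J → ℝ)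
    (hΓreq : 0 < Γreq) (hσz : 0 < σz2) :
    (sInf {t : ℝ | ∃ w V, FeasOrig h ghat lhat Γreq σz2 Pmax σPU2 Γtol σzk2 ε ΓtolPU υ w V ∧
          t = (star w ⬝ᵥ w).re + V.trace.re} =
      sInf {t : ℝ | ∃ Wb Vb ξ,
          FeasTrans h ghat lhat Γreq σz2 Pmax σPU2 Γtol σzk2 ε ΓtolPU υ Wb Vb ξ ∧
          t = 1 / ξ}) ∧
    (∀ w V, FeasOrig h ghat lhat Γreq σz2 Pmax σPU2 Γtol σzk2 ε ΓtolPU υ w V →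
        0 < (star w ⬝ᵥ w).re + V.trace.re ∧
        FeasTrans h ghat lhat Γreq σz2 Pmax σPU2 Γtol σzk2 ε ΓtolPU υ
          ((((star w ⬝ᵥ w).re + V.trace.re)⁻¹ : ℂ) • Matrix.vecMulVec w (star w))
          ((((star w ⬝ᵥ w).re + V.trace.re)⁻¹ : ℂ) • V)
          (((star w ⬝ᵥ w).re + V.trace.re)⁻¹) ∧
        1 / (((star w ⬝ᵥ w).re + V.trace.re)⁻¹) = (star w ⬝ᵥ w).re + V.trace.re) ∧
    (∀ Wb Vb ξ, FeasTrans h ghat lhat Γreq σz2 Pmax σPU2 Γtol σzk2 ε ΓtolPU υ Wb Vb ξ →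
        0 < ξ ∧
        ∃ wbar : Fin NT → ℂ,
          ((ξ : ℂ)⁻¹ • Wb) = Matrix.vecMulVec wbar (star wbar) ∧
          FeasOrig h ghat lhat Γreq σz2 Pmax σPU2 Γtol σzk2 ε ΓtolPU υ wbar ((ξ : ℂ)⁻¹ • Vb) ∧
          (star wbar ⬝ᵥ wbar).re + ((ξ : ℂ)⁻¹ • Vb).trace.re = 1 / ξ) := by
  refine ⟨?_, fun w V hF => ⟨hF.totalPower_pos hΓreq hσz, ?_, by rw [one_div, inv_inv]⟩,
    fun Wb Vb ξ hT => ⟨hT.pos, hT.exists_feasOrig⟩⟩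
  · congr 1
    ext t
    constructor
    · rintro ⟨w, V, hF, rfl⟩
      exact ⟨_, _, _, hF.feasTrans_smul_inv hΓreq hσz, by rw [one_div, inv_inv]⟩
    · rintro ⟨Wb, Vb, ξ, hT, rfl⟩
      obtain ⟨wbar, -, hF, hpower⟩ := hT.exists_feasOrig
      exact ⟨wbar, _, hF, hpower.symm⟩
  · simpa only [Complex.ofReal_inv, Complex.ofReal_add] using hF.feasTrans_smul_inv hΓreq hσz

/-- Equivalence of the transmit power minimization problem and its Charnes–Cooper
transformed version: the optimal values coincide, every feasible `(w,V)` yields a feasible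
transformed point with the same objective, and every feasible transformed point yields a
feasible original point with the same objective. -/
theorem power_min_equiv {NT K J : ℕ} (hNT : 1 ≤ NT) (h : Fin NT → ℂ)
    (ghat : Fin (K - 1) → Fin NT → ℂ) (lhat : Fin J → Fin NT → ℂ)
    (Γreq σz2 Pmax σPU2 : ℝ) (Γtol σzk2 ε : Fin (K - 1) → ℝ) (ΓtolPU υ : Fin J → ℝ)
    (hΓreq : 0 < Γreq) (hσz : 0 < σz2) (hPmax : 0 < Pmax) (hσPU : 0 < σPU2)
    (hΓtol : ∀ k, 0 < Γtol k) (hσzk : ∀ k, 0 < σzk2 k) (hε : ∀ k, 0 < ε k)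
    (hΓPU : ∀ j, 0 < ΓtolPU j) (hυ : ∀ j, 0 < υ j) :
    (sInf {t : ℝ | ∃ w V, FeasOrig h ghat lhat Γreq σz2 Pmax σPU2 Γtol σzk2 ε ΓtolPU υ w V ∧
          t = (star w ⬝ᵥ w).re + V.trace.re} =
      sInf {t : ℝ | ∃ Wb Vb ξ,
          FeasTrans h ghat lhat Γreq σz2 Pmax σPU2 Γtol σzk2 ε ΓtolPU υ Wb Vb ξ ∧
          t = 1 / ξ}) ∧
    (∀ w V, FeasOrig h ghat lhat Γreq σz2 Pmax σPU2 Γtol σzk2 ε ΓtolPU υ w V →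
        0 < (star w ⬝ᵥ w).re + V.trace.re ∧
        FeasTrans h ghat lhat Γreq σz2 Pmax σPU2 Γtol σzk2 ε ΓtolPU υ
          ((((star w ⬝ᵥ w).re + V.trace.re)⁻¹ : ℂ) • Matrix.vecMulVec w (star w))
          ((((star w ⬝ᵥ w).re + V.trace.re)⁻¹ : ℂ) • V)
          (((star w ⬝ᵥ w).re + V.trace.re)⁻¹) ∧
        1 / (((star w ⬝ᵥ w).re + V.trace.re)⁻¹) = (star w ⬝ᵥ w).re + V.trace.re) ∧
    (∀ Wb Vb ξ, FeasTrans h ghat lhat Γreq σz2 Pmax σPU2 Γtol σzk2 ε ΓtolPU υ Wb Vb ξ →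
        0 < ξ ∧
        ∃ wbar : Fin NT → ℂ,
          ((ξ : ℂ)⁻¹ • Wb) = Matrix.vecMulVec wbar (star wbar) ∧
          FeasOrig h ghat lhat Γreq σz2 Pmax σPU2 Γtol σzk2 ε ΓtolPU υ wbar ((ξ : ℂ)⁻¹ • Vb) ∧
          (star wbar ⬝ᵥ wbar).re + ((ξ : ℂ)⁻¹ • Vb).trace.re = 1 / ξ) :=
  power_min_equiv_general h ghat lhat Γreq σz2 Pmax σPU2 Γtol σzk2 ε ΓtolPU υ hΓreq hσz
end

section
/- Let W̄, V̄ ∈ ℂ^{N×N} be Hermitian positive semidefinite, ξ > 0, Γ_req > 0, σ_z² > 0, H = h hᴴ for some h ∈ ℂ^N, P_max > 0, and suppose (W̄, V̄, ξ) satisfies the strict inequality Tr(H W̄) > Γ_req (Tr(H V̄) + σ_z² ξ), the robust constraints 'for every k and every Δg with Δgᴴ Δg ≤ ε_k², writing g = ĝ_k + Δg: gᴴ W̄ g ≤ Γ_tol_k (gᴴ V̄ g + σ_{z_k}² ξ)' and 'for every j and every Δl with Δlᴴ Δl ≤ υ_j², writing l = l̂_j + Δl: lᴴ W̄ l ≤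 Γ_tol_j^PU (lᴴ V̄ l + σ_PU² ξ)' (with all tolerances and noise variances positive), and Tr(W̄) + Tr(V̄) ≤ P_max ξ. Then c := (Tr(H W̄) − Γ_req Tr(H V̄))/(Γ_req σ_z² ξ) satisfies c > 1, and the point (W̄, V̄, cξ) satisfies all the above robust constraints and the power constraint Tr(W̄) + Tr(V̄) ≤ P_max (cξ), satisfies the SINR constraint with equality, i.e., Tr(H W̄) = Γ_req (Tr(H V̄) + σ_z² (cξ)), and has strictly smaller transmit-power objective: 1/(cξ) < 1/ξ. -/
open Matrix
open scoped ComplexOrder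

/-- If a feasible point of the transformed problem satisfies the minimum-SINR constraint
C̄1 with strict inequality, then scaling `ξ` by
`c = (Tr(H W̄) − Γ_req Tr(H V̄))/(Γ_req σ_z² ξ) > 1` preserves all robust constraints and
the power constraint, makes C̄1 hold with equality, and strictly decreases the
transmit-power objective `1/ξ`. -/
theorem sinr_constraint_tight {N K J : ℕ} (hN : 1 ≤ N)
    (W V : Matrix (Fin N) (Fin N) ℂ) (hW : W.PosSemidef) (hV : V.PosSemidef)
    (ξ : ℝ) (hξ : 0 < ξ) (h : Fin N → ℂ) (Γreq σz2 Pmax σPU2 : ℝ)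
    (hΓreq : 0 < Γreq) (hσz : 0 < σz2) (hPmax : 0 < Pmax) (hσPU : 0 < σPU2)
    (ghat : Fin (K - 1) → Fin N → ℂ) (ε Γtol σzk2 : Fin (K - 1) → ℝ)
    (hε : ∀ k, 0 < ε k) (hΓtol : ∀ k, 0 < Γtol k) (hσzk : ∀ k, 0 < σzk2 k)
    (lhat : Fin J → Fin N → ℂ) (υ ΓtolPU : Fin J → ℝ)
    (hυ : ∀ j, 0 < υ j) (hΓPU : ∀ j, 0 < ΓtolPU j)
    (hC1 : Γreq * ((Matrix.vecMulVec h (star h) * V).trace.re + σz2 * ξ) <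
        (Matrix.vecMulVec h (star h) * W).trace.re)
    (hC2 : ∀ k, ∀ Δg : Fin N → ℂ, (star Δg ⬝ᵥ Δg).re ≤ ε k ^ 2 →
        (star (ghat k + Δg) ⬝ᵥ W *ᵥ (ghat k + Δg)).re ≤
          Γtol k * ((star (ghat k + Δg) ⬝ᵥ V *ᵥ (ghat k + Δg)).re + σzk2 k * ξ))
    (hC3 : ∀ j, ∀ Δl : Fin N → ℂ, (star Δl ⬝ᵥ Δl).re ≤ υ j ^ 2 →
        (star (lhat j + Δl) ⬝ᵥ W *ᵥ (lhat j + Δl)).re ≤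
          ΓtolPU j * ((star (lhat j + Δl) ⬝ᵥ V *ᵥ (lhat j + Δl)).re + σPU2 * ξ))
    (hC4 : W.trace.re + V.trace.re ≤ Pmax * ξ) :
    let c : ℝ := ((Matrix.vecMulVec h (star h) * W).trace.re -
        Γreq * (Matrix.vecMulVec h (star h) * V).trace.re) / (Γreq * σz2 * ξ)
    1 < c ∧
    (∀ k, ∀ Δg : Fin N → ℂ, (star Δg ⬝ᵥ Δg).re ≤ ε k ^ 2 →
        (star (ghat k + Δg) ⬝ᵥ W *ᵥ (ghat k + Δg)).re ≤
          Γtol k * ((star (ghat k + Δg) ⬝ᵥ V *ᵥ (ghat k + Δg)).re + σzk2 k * (c * ξ))) ∧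
    (∀ j, ∀ Δl : Fin N → ℂ, (star Δl ⬝ᵥ Δl).re ≤ υ j ^ 2 →
        (star (lhat j + Δl) ⬝ᵥ W *ᵥ (lhat j + Δl)).re ≤
          ΓtolPU j * ((star (lhat j + Δl) ⬝ᵥ V *ᵥ (lhat j + Δl)).re + σPU2 * (c * ξ))) ∧
    W.trace.re + V.trace.re ≤ Pmax * (c * ξ) ∧
    (Matrix.vecMulVec h (star h) * W).trace.re =
      Γreq * ((Matrix.vecMulVec h (star h) * V).trace.re + σz2 * (c * ξ)) ∧
    1 / (c * ξ) < 1 / ξ := by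

  intro c
  set A := (Matrix.vecMulVec h (star h) * W).trace.re with hA
  set B := (Matrix.vecMulVec h (star h) * V).trace.re with hB
  have hden : 0 < Γreq * σz2 * ξ := by positivity
  have hc1 : 1 < c := by
    rw [show c = (A - Γreq * B) / (Γreq * σz2 * ξ) from rfl, lt_div_iff₀ hden]
    nlinarith [hC1]
  have hcξ : ξ ≤ c * ξ := by nlinarith
  refine ⟨hc1, ?_, ?_, ?_, ?_, ?_⟩
  · intro k Δg hΔ
    have := hC2 k Δg hΔ
    have hm : σzk2 k * ξ ≤ σzk2 k * (c * ξ) := by nlinarith [hσzk k]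
    have : Γtol k * ((star (ghat k + Δg) ⬝ᵥ V *ᵥ (ghat k + Δg)).re + σzk2 k * ξ) ≤
        Γtol k * ((star (ghat k + Δg) ⬝ᵥ V *ᵥ (ghat k + Δg)).re + σzk2 k * (c * ξ)) :=
      mul_le_mul_of_nonneg_left (by linarith) (hΓtol k).le
    linarith [hC2 k Δg hΔ]
  · intro j Δl hΔ
    have hm : σPU2 * ξ ≤ σPU2 * (c * ξ) := by nlinarith
    have : ΓtolPU j * ((star (lhat j + Δl) ⬝ᵥ V *ᵥ (lhat j + Δl)).re + σPU2 * ξ) ≤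
        ΓtolPU j * ((star (lhat j + Δl) ⬝ᵥ V *ᵥ (lhat j + Δl)).re + σPU2 * (c * ξ)) :=
      mul_le_mul_of_nonneg_left (by linarith) (hΓPU j).le
    linarith [hC3 j Δl hΔ]
  · nlinarith
  · have : c * (Γreq * σz2 * ξ) = A - Γreq * B := by
      rw [show c = (A - Γreq * B) / (Γreq * σz2 * ξ) from rfl]
      field_simp
    ring_nf
    ring_nf at this
    linarith
  · have hc0 : 0 < c := by linarith
    exact one_div_lt_one_div_of_lt hξ (by nlinarith)
end

section
/- Let W ∈ ℂ^{N×N} be Hermitian positive semidefinite and h ∈ ℂ^N with hᴴ W h > 0. Define W̃ = (W h)(W h)ᴴ / (hᴴ W h). Then: (i) W̃ is Hermitian positive semidefinite of rank exactly one; (ii) hᴴ W̃ h = hᴴ W h, i.e., Tr((h hᴴ) W̃) = Tr((h hᴴ) W); and (iii) W − W̃ is positive semidefinite. -/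
/-!
With `c = hᴴ W h` and `v = W h`, the matrix `W̃ = c⁻¹ v vᴴ` is a nonnegative multiple of the
Gram matrix `v vᴴ`, of rank one since `hᴴ v = c ≠ 0`, and `hᴴ W̃ h = c⁻¹ |hᴴ v|² = c`.
The remainder is positive semidefinite by the Cauchy–Schwarz inequality for the semi-inner
product `⟪x, y⟫ = xᴴ W y`: `xᴴ (W - W̃) x = ⟪x, x⟫ - |⟪x, h⟫|² / ⟪h, h⟫ ≥ 0`.
-/

open Matrix
open scoped ComplexOrder

namespace Matrix

theorem dotProduct_vecMulVec_mulVec {n R : Type*} [Fintype n] [CommSemiring R]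
    (u a b y : n → R) : u ⬝ᵥ vecMulVec a b *ᵥ y = (u ⬝ᵥ a) * (b ⬝ᵥ y) := by
  rw [vecMulVec_mulVec, op_smul_eq_smul, dotProduct_smul, smul_eq_mul, mul_comm]

theorem trace_vecMulVec_mul {n R : Type*} [Fintype n] [CommSemiring R]
    (a b : n → R) (M : Matrix n n R) : (vecMulVec a b * M).trace = b ⬝ᵥ M *ᵥ a := by
  rw [vecMulVec_mul, trace_vecMulVec, dotProduct_comm, dotProduct_mulVec]

theorem rank_pos_of_ne_zero {m n K : Type*} [Fintype n] [Field K] {M : Matrix m n K}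
    (hM : M ≠ 0) : 0 < M.rank := by
  classical
  rw [pos_iff_ne_zero, Ne, rank, Submodule.finrank_eq_zero, LinearMap.range_eq_bot,
    ← toLin'_apply', map_eq_zero_iff _ toLin'.injective]
  exact hM

variable {n 𝕜 : Type*} [Fintype n] [RCLike 𝕜]

theorem PosSemidef.norm_dotProduct_mulVec_sq_le {W : Matrix n n 𝕜} (hW : W.PosSemidef)
    (x y : n → 𝕜) :
    ‖star x ⬝ᵥ W *ᵥ y‖ ^ 2 ≤ RCLike.re (star x ⬝ᵥ W *ᵥ x) * RCLike.re (star y ⬝ᵥ W *ᵥ y) := by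
  let := W.toSeminormedAddCommGroup hW
  let := W.toInnerProductSpace hW
  have hinner (u v : n → 𝕜) : inner 𝕜 u v = star u ⬝ᵥ W *ᵥ v := dotProduct_comm _ _
  have := inner_mul_inner_self_le (𝕜 := 𝕜) x y
  rwa [norm_inner_symm y x, ← sq, hinner, hinner, hinner] at this

theorem PosSemidef.ofReal_re_dotProduct_mulVec {W : Matrix n n 𝕜} (hW : W.PosSemidef)
    (x : n → 𝕜) : (RCLike.re (star x ⬝ᵥ W *ᵥ x) : 𝕜) = star x ⬝ᵥ W *ᵥ x :=
  RCLike.conj_eq_iff_re.mp (IsSelfAdjoint.of_nonneg (hW.dotProduct_mulVec_nonneg x))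

/-- The matrix `W̃` of the paper; it is `0` when `hᴴ W h = 0`. -/
noncomputable def rankOneExtraction (W : Matrix n n 𝕜) (h : n → 𝕜) : Matrix n n 𝕜 :=
  (star h ⬝ᵥ W *ᵥ h)⁻¹ • vecMulVec (W *ᵥ h) (star (W *ᵥ h))

theorem dotProduct_rankOneExtraction_mulVec (W : Matrix n n 𝕜) (h x : n → 𝕜) :
    star x ⬝ᵥ W.rankOneExtraction h *ᵥ x
      = (star h ⬝ᵥ W *ᵥ h)⁻¹ * ((star x ⬝ᵥ W *ᵥ h) * star (star x ⬝ᵥ W *ᵥ h)) := by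
  rw [rankOneExtraction, smul_mulVec, dotProduct_smul, smul_eq_mul,
    dotProduct_vecMulVec_mulVec, star_dotProduct (W *ᵥ h) x]

theorem PosSemidef.rankOneExtraction {W : Matrix n n 𝕜} (hW : W.PosSemidef) (h : n → 𝕜) :
    (W.rankOneExtraction h).PosSemidef :=
  (posSemidef_vecMulVec_self_star _).smul (inv_nonneg.mpr (hW.dotProduct_mulVec_nonneg h))

theorem PosSemidef.dotProduct_rankOneExtraction_mulVec_self {W : Matrix n n 𝕜}
    (hW : W.PosSemidef) {h : n → 𝕜} (hc : star h ⬝ᵥ W *ᵥ h ≠ 0) :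
    star h ⬝ᵥ W.rankOneExtraction h *ᵥ h = star h ⬝ᵥ W *ᵥ h := by
  rw [dotProduct_rankOneExtraction_mulVec, IsSelfAdjoint.of_nonneg (hW.dotProduct_mulVec_nonneg h),
    inv_mul_cancel_left₀ hc]

theorem PosSemidef.sub_rankOneExtraction {W : Matrix n n 𝕜} (hW : W.PosSemidef) (h : n → 𝕜) :
    (W - W.rankOneExtraction h).PosSemidef := by
  refine .of_dotProduct_mulVec_nonneg (hW.1.sub (hW.rankOneExtraction h).1) fun x => ?_
  have hcs := hW.norm_dotProduct_mulVec_sq_le x h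
  rw [sub_mulVec, dotProduct_sub, dotProduct_rankOneExtraction_mulVec,
    ← hW.ofReal_re_dotProduct_mulVec x, ← hW.ofReal_re_dotProduct_mulVec h,
    RCLike.star_def, RCLike.mul_conj]
  norm_cast
  rw [sub_nonneg]
  exact inv_mul_le_of_le_mul₀ (hW.re_dotProduct_nonneg h) (hW.re_dotProduct_nonneg x)
    (hcs.trans_eq (mul_comm _ _))

theorem rank_rankOneExtraction {W : Matrix n n 𝕜} {h : n → 𝕜} (hc : star h ⬝ᵥ W *ᵥ h ≠ 0) :
    (W.rankOneExtraction h).rank = 1 := by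
  have hWh : W *ᵥ h ≠ 0 := fun h0 => hc (by rw [h0, dotProduct_zero])
  have hne : W.rankOneExtraction h ≠ 0 :=
    smul_ne_zero (inv_ne_zero hc) (vecMulVec_ne_zero hWh (star_ne_zero.mpr hWh))
  have hle : (W.rankOneExtraction h).rank ≤ 1 := by
    rw [rankOneExtraction, ← smul_vecMulVec]
    exact rank_vecMulVec_le _ _
  exact le_antisymm hle (rank_pos_of_ne_zero hne)

end Matrix

/-- Rank-one extraction: for `W` PSD and `h` with `hᴴ W h > 0`, the matrix
`W̃ = (W h)(W h)ᴴ / (hᴴ W h)` is PSD of rank one, preserves the received power at the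
desired receiver, and `W − W̃` is PSD. -/
theorem rank_one_extraction {N : ℕ} (W : Matrix (Fin N) (Fin N) ℂ) (hW : W.PosSemidef)
    (h : Fin N → ℂ) (hpos : 0 < (star h ⬝ᵥ W *ᵥ h).re) :
    let Wt : Matrix (Fin N) (Fin N) ℂ :=
      (star h ⬝ᵥ W *ᵥ h)⁻¹ • Matrix.vecMulVec (W *ᵥ h) (star (W *ᵥ h))
    Wt.PosSemidef ∧ Wt.rank = 1 ∧
    star h ⬝ᵥ Wt *ᵥ h = star h ⬝ᵥ W *ᵥ h ∧
    (Matrix.vecMulVec h (star h) * Wt).trace = (Matrix.vecMulVec h (star h) * W).trace ∧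
    (W - Wt).PosSemidef := by
  have hc : star h ⬝ᵥ W *ᵥ h ≠ 0 := fun hc0 => by simp [hc0] at hpos
  have hpower := hW.dotProduct_rankOneExtraction_mulVec_self hc
  exact ⟨hW.rankOneExtraction h, rank_rankOneExtraction hc, hpower,
    (trace_vecMulVec_mul _ _ _).trans (hpower.trans (trace_vecMulVec_mul _ _ _).symm),
    hW.sub_rankOneExtraction h⟩
end

section
/- Fix N ≥ 1, ĝ ∈ ℂ^N, ε > 0, σ² > 0, Γ > 0, and for Hermitian W̄, V̄ ∈ ℂ^{N×N} and ξ, δ ∈ ℝ define the (N+1)×(N+1) Hermitian matrix S(W̄, V̄, ξ, δ) = [[δ I_N + V̄ − W̄/Γ, (V̄ − W̄/Γ) ĝ],[ĝᴴ (V̄ − W̄/Γ), −δ ε² + ξ σ² + ĝᴴ (V̄ − W̄/Γ) ĝ]]. Then for every Hermitian S ∈ ℂ^{N×N}: S(W̄ − S, V̄ + S, ξ, δ) = S(W̄, V̄, ξ, δ) + (1 + 1/Γ) U_ĝᴴ S U_ĝ, where U_ĝ = [I_N ĝ] ∈ ℂ^{N×(N+1)}. Consequently, if S is positive semidefinite and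 S(W̄, V̄, ξ, δ) is positive semidefinite, then S(W̄ − S, V̄ + S, ξ, δ) is positive semidefinite. -/
/-! `S(W̄, V̄, ξ, δ)` is a constant block matrix plus `U_ĝᴴ (V̄ − W̄/Γ) U_ĝ`, so it depends on
`(W̄, V̄)` only through `V̄ − W̄/Γ`, and affinely. Moving `S` from `W̄` to `V̄` changes
`V̄ − W̄/Γ` by `(1 + 1/Γ) S`, which adds `(1 + 1/Γ) U_ĝᴴ S U_ĝ`; this congruence of a PSD
matrix scaled by a positive number is PSD. -/

open Matrix
open scoped ComplexOrder

/-- The LMI matrix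
`S(W̄, V̄, ξ, δ) = [[δ I_N + V̄ − W̄/Γ, (V̄ − W̄/Γ) ĝ],[ĝᴴ (V̄ − W̄/Γ), −δ ε² + ξ σ² + ĝᴴ (V̄ − W̄/Γ) ĝ]]`
for the robust eavesdropper-SINR constraint C̄2. -/
noncomputable def SC2 {N : ℕ} (ghat : Fin N → ℂ) (ε σ2 Γ : ℝ)
    (W V : Matrix (Fin N) (Fin N) ℂ) (ξ δ : ℝ) : Matrix (Fin N ⊕ Unit) (Fin N ⊕ Unit) ℂ :=
  Matrix.fromBlocks
    ((δ : ℂ) • (1 : Matrix (Fin N) (Fin N) ℂ) + (V - (Γ : ℂ)⁻¹ • W))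
    (Matrix.replicateCol Unit ((V - (Γ : ℂ)⁻¹ • W) *ᵥ ghat))
    (Matrix.replicateRow Unit (star ghat ᵥ* (V - (Γ : ℂ)⁻¹ • W)))
    (Matrix.of fun _ _ =>
      (-(δ * ε ^ 2) + ξ * σ2 : ℂ) + star ghat ⬝ᵥ (V - (Γ : ℂ)⁻¹ • W) *ᵥ ghat)

namespace Matrix

variable {R n ι : Type*} [Fintype n] [DecidableEq n] [Semiring R] [StarRing R]

theorem conjTranspose_fromCols_one_replicateCol_mul_mul (A : Matrix n n R) (v : n → R) :
    (fromCols 1 (replicateCol ι v))ᴴ * A * fromCols 1 (replicateCol ι v) =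
      fromBlocks A (replicateCol ι (A *ᵥ v)) (replicateRow ι (star v ᵥ* A))
        (of fun _ _ => star v ⬝ᵥ A *ᵥ v) := by
  rw [conjTranspose_fromCols_eq_fromRows_conjTranspose, fromRows_mul, fromRows_mul_fromCols,
    conjTranspose_one, conjTranspose_replicateCol, Matrix.one_mul, Matrix.mul_one,
    ← replicateRow_vecMul, ← replicateCol_mulVec, replicateRow_mul_replicateCol,
    dotProduct_mulVec, Matrix.mul_one]

end Matrix

theorem SC2_eq_fromBlocks_add_conjTranspose_Ug_mul_mul {N : ℕ} (ghat : Fin N → ℂ)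
    (ε σ2 Γ : ℝ) (W V : Matrix (Fin N) (Fin N) ℂ) (ξ δ : ℝ) :
    SC2 ghat ε σ2 Γ W V ξ δ =
      fromBlocks ((δ : ℂ) • 1) 0 0 (of fun _ _ => (-(δ * ε ^ 2) + ξ * σ2 : ℂ)) +
        (Ug ghat)ᴴ * (V - (Γ : ℂ)⁻¹ • W) * Ug ghat := by
  rw [Ug, conjTranspose_fromCols_one_replicateCol_mul_mul, fromBlocks_add, zero_add, zero_add]
  rfl

theorem lmi_shift_identity_general {N : ℕ} (ghat : Fin N → ℂ) (ε σ2 Γ : ℝ)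
    (hΓ : 0 < Γ)
    (W V S : Matrix (Fin N) (Fin N) ℂ) (ξ δ : ℝ) :
    SC2 ghat ε σ2 Γ (W - S) (V + S) ξ δ =
      SC2 ghat ε σ2 Γ W V ξ δ + ((1 : ℂ) + (Γ : ℂ)⁻¹) • ((Ug ghat)ᴴ * S * Ug ghat) ∧
    (S.PosSemidef → (SC2 ghat ε σ2 Γ W V ξ δ).PosSemidef →
      (SC2 ghat ε σ2 Γ (W - S) (V + S) ξ δ).PosSemidef) := by
  have hdiff : (V + S) - (Γ : ℂ)⁻¹ • (W - S) =
      (V - (Γ : ℂ)⁻¹ • W) + ((1 : ℂ) + (Γ : ℂ)⁻¹) • S := by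
    module
  have hshift_eq : SC2 ghat ε σ2 Γ (W - S) (V + S) ξ δ =
      SC2 ghat ε σ2 Γ W V ξ δ + ((1 : ℂ) + (Γ : ℂ)⁻¹) • ((Ug ghat)ᴴ * S * Ug ghat) := by
    rw [SC2_eq_fromBlocks_add_conjTranspose_Ug_mul_mul,
      SC2_eq_fromBlocks_add_conjTranspose_Ug_mul_mul, hdiff, Matrix.mul_add, Matrix.add_mul,
      Matrix.mul_smul, Matrix.smul_mul, add_assoc]
  refine ⟨hshift_eq, fun hS hSC2 => ?_⟩
  have hc : (0 : ℂ) ≤ 1 + (Γ : ℂ)⁻¹ := by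
    exact_mod_cast (by positivity : (0 : ℝ) ≤ 1 + Γ⁻¹)
  rw [hshift_eq]
  exact hSC2.add ((hS.conjTranspose_mul_mul_same (Ug ghat)).smul hc)

/-- Shifting a PSD part `S` from the beamforming matrix to the artificial-noise covariance
matrix transforms the LMI matrix by adding `(1 + 1/Γ) U_ĝᴴ S U_ĝ`; in particular it
preserves positive semidefiniteness of the LMI. -/
theorem lmi_shift_identity {N : ℕ} (hN : 1 ≤ N) (ghat : Fin N → ℂ) (ε σ2 Γ : ℝ)
    (hε : 0 < ε) (hσ : 0 < σ2) (hΓ : 0 < Γ)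
    (W V S : Matrix (Fin N) (Fin N) ℂ) (hW : W.IsHermitian) (hV : V.IsHermitian)
    (hS : S.IsHermitian) (ξ δ : ℝ) :
    SC2 ghat ε σ2 Γ (W - S) (V + S) ξ δ =
      SC2 ghat ε σ2 Γ W V ξ δ + ((1 : ℂ) + (Γ : ℂ)⁻¹) • ((Ug ghat)ᴴ * S * Ug ghat) ∧
    (S.PosSemidef → (SC2 ghat ε σ2 Γ W V ξ δ).PosSemidef →
      (SC2 ghat ε σ2 Γ (W - S) (V + S) ξ δ).PosSemidef) :=
  lmi_shift_identity_general ghat ε σ2 Γ hΓ W V S ξ δ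
end
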